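/- Let p be a prime, A a commutative ring, π ∈ A, and m₁, m₂ natural numbers with p·m₁ ≤ m₂. Then for all x₁, x₂, y₁, y₂ ∈ A: π^{m₂(p−1)}·(x₂ + y₂ − π^{m₂−pm₁}·E_p(x₁,y₁)) = π^{m₂(p−1)}·x₂ + π^{m₂(p−1)}·y₂ − π^{p(m₂−pm₁)}·E_p(π^{m₁(p−1)}·x₁, π^{m₁(p−1)}·y₁). In other words, the map I : (x₁,x₂) ↦ (π^{m₁(p−1)}·x₁, π^{m₂(p−1)}·x₂) is a group homomorphism from A × A equipped with the π^{m₂−pm₁}-twisted group law (x₁,x₂) ⋆_c (y₁,y₂) = (x₁+y₁, x₂+y₂ − c·E_p(x₁,y₁)) to A × A equipped with the π^{p(m₂−pm₁)}-twisted group law. -/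

import Mathlib

/-! The scaling `(x₁, x₂) ↦ (u x₁, v x₂)` carries the `c`-twisted law
`(x₁, x₂) ⋆ (y₁, y₂) = (x₁ + y₁, x₂ + y₂ - c E_p(x₁, y₁))` to the `c'`-twisted one as soon as
`v c = c' uᵖ`, because `E_p` is homogeneous of degree `p`. For `u = π^{m₁(p-1)}`,
`v = π^{m₂(p-1)}`, `c = π^{m₂-pm₁}`, `c' = π^{p(m₂-pm₁)}` this condition is an identity of
exponents. -/

/-- `E_p(a,b) = ∑_{k=1}^{p−1} (binom(p,k)/p)·a^k·b^{p−k}`. -/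
def wittE (p : ℕ) {A : Type*} [CommRing A] (a b : A) : A :=
  ∑ k ∈ Finset.Ico 1 p, (p.choose k / p : ℕ) * a ^ k * b ^ (p - k)

section

variable {A : Type*} [CommRing A]

theorem wittE_mul_mul (p : ℕ) (c a b : A) :
    wittE p (c * a) (c * b) = c ^ p * wittE p a b := by
  unfold wittE
  rw [Finset.mul_sum]
  refine Finset.sum_congr rfl fun k hk => ?_
  have hkp : k ≤ p := (Finset.mem_Ico.mp hk).2.le
  rw [mul_pow, mul_pow, ← pow_mul_pow_sub c hkp]
  ring

theorem mul_twisted_add_eq_of_mul_eq (p : ℕ) {u v c c' : A} (h : v * c = c' * u ^ p)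
    (x₁ x₂ y₁ y₂ : A) :
    v * (x₂ + y₂ - c * wittE p x₁ y₁) = v * x₂ + v * y₂ - c' * wittE p (u * x₁) (u * y₁) := by
  rw [wittE_mul_mul, ← mul_assoc, ← h]
  ring

end

theorem twist_exponent_eq {p m₁ m₂ : ℕ} (hp : 1 ≤ p) (hm : p * m₁ ≤ m₂) :
    m₂ * (p - 1) + (m₂ - p * m₁) = p * (m₂ - p * m₁) + m₁ * (p - 1) * p := by
  obtain ⟨d, rfl⟩ := Nat.exists_eq_add_of_le hm
  obtain ⟨q, rfl⟩ := Nat.exists_eq_add_of_le hp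
  simp only [Nat.add_sub_cancel_left]
  ring

/-- Section 2.3.1: `I : (x₁,x₂) ↦ (π^{m₁(p−1)}x₁, π^{m₂(p−1)}x₂)` is a homomorphism from
the `π^{m₂−pm₁}`-twisted group law to the `π^{p(m₂−pm₁)}`-twisted group law. -/
theorem twisted_scaling_hom
    (p : ℕ) (hp : p.Prime) (A : Type*) [CommRing A] (π : A)
    (m₁ m₂ : ℕ) (hm : p * m₁ ≤ m₂)
    (x₁ x₂ y₁ y₂ : A) :
    π ^ (m₂ * (p - 1)) * (x₂ + y₂ - π ^ (m₂ - p * m₁) * wittE p x₁ y₁) =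
      π ^ (m₂ * (p - 1)) * x₂ + π ^ (m₂ * (p - 1)) * y₂ -
        π ^ (p * (m₂ - p * m₁)) *
          wittE p (π ^ (m₁ * (p - 1)) * x₁) (π ^ (m₁ * (p - 1)) * y₁) := by
  refine mul_twisted_add_eq_of_mul_eq p ?_ x₁ x₂ y₁ y₂
  rw [← pow_add, ← pow_mul, ← pow_add, twist_exponent_eq hp.one_le hm]
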